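/- Let n ≥ 1, ζ = e^{2πi/n}, N = ⌊n/2⌋, and let π be any permutation of {0, 1, …, N}. Then there exist real numbers a₀, …, a_{n−1} such that the eigenvalues μ_k = Σ_{j=0}^{n−1} a_j ζ^{jk} of the circulant matrix Σ a_j A^j satisfy: Re(μ_k) < Re(μ_l) if and only if π(k) > π(l), for all 0 ≤ k, l ≤ N. That is, the real parts of μ_0, …, μ_N can be put in any prescribed strict order. -/

import Mathlib

/-!
Extend the prescribed values `-(π k)` (`0 ≤ k ≤ n / 2`) to an even real function `t` on `ZMod n`
through `x ↦ |x.valMinAbs|`. The eigenvalue map `a ↦ (μ_k)_k` is a discrete Fourier transform,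
so Fourier inversion produces coefficients with `μ = t`; these coefficients are real because the
Fourier transform of a real even function is real.
-/

open Complex

namespace ZMod

variable {n : ℕ} [NeZero n]

lemma conj_dft (Φ : ZMod n → ℂ) (k : ZMod n) :
    (starRingEnd ℂ) (𝓕 Φ k) = 𝓕 (fun j ↦ (starRingEnd ℂ) (Φ j)) (-k) := by
  simp only [dft_apply, map_sum, smul_eq_mul, map_mul, ← AddChar.map_neg_eq_conj, mul_neg,
    neg_neg]

lemma exists_real_dft_eq_of_even {t : ZMod n → ℝ} (ht : t.Even) :
    ∃ b : ZMod n → ℝ, 𝓕 (fun j ↦ (b j : ℂ)) = fun k ↦ (t k : ℂ) := by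
  set T : ZMod n → ℂ := fun k ↦ (t k : ℂ)
  have hT : T.Even := fun k ↦ congrArg ofReal (ht k)
  have hreal (k : ZMod n) : (starRingEnd ℂ) (𝓕 T k) = 𝓕 T k := by
    rw [conj_dft]
    simp only [T, conj_ofReal]
    exact dft_even_iff.2 hT k
  refine ⟨fun k ↦ (𝓕 T k).re / n, ?_⟩
  have hb : (fun k ↦ (((𝓕 T k).re / n : ℝ) : ℂ)) = (n : ℂ)⁻¹ • 𝓕 T := by
    ext k
    rw [Pi.smul_apply, smul_eq_mul, ofReal_div, conj_eq_iff_re.1 (hreal k)]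
    push_cast
    ring
  rw [hb, LinearEquiv.map_smul, dft_dft]
  ext k
  simp [T, ht k, NeZero.ne]

lemma natCast_fin_bijective : Function.Bijective (fun j : Fin n ↦ ((j : ℕ) : ZMod n)) := by
  refine (Fintype.bijective_iff_injective_and_card _).2 ⟨fun i j hij ↦ ?_, by simp⟩
  simpa [val_cast_of_lt i.isLt, val_cast_of_lt j.isLt, Fin.ext_iff] using congrArg val hij

lemma sum_fin_mul_pow_eq_dft_neg {ζ : ℂ} (hζ : ζ = exp (2 * Real.pi * I / n))
    (b : ZMod n → ℂ) (k : ℕ) :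
    ∑ j : Fin n, b (j : ℕ) * ζ ^ ((j : ℕ) * k) = 𝓕 b (-k) := by
  rw [dft_apply]
  refine Fintype.sum_bijective _ natCast_fin_bijective _ _ fun j ↦ ?_
  rw [mul_neg, neg_neg, stdAddChar_apply, ← Nat.cast_mul, toCircle_natCast, smul_eq_mul, mul_comm,
    hζ, ← exp_nat_mul]
  push_cast
  ring_nf

def halfIndex (x : ZMod n) : Fin (n / 2 + 1) :=
  ⟨x.valMinAbs.natAbs, Nat.lt_succ_of_le x.natAbs_valMinAbs_le⟩

lemma halfIndex_neg (x : ZMod n) : halfIndex (-x) = halfIndex x :=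
  Fin.ext (natAbs_valMinAbs_neg x)

lemma halfIndex_natCast (k : Fin (n / 2 + 1)) : halfIndex ((k : ℕ) : ZMod n) = k :=
  Fin.ext <| by simp [halfIndex, valMinAbs_natCast_of_le_half (Nat.le_of_lt_succ k.isLt)]

end ZMod

/-- Any prescribed strict ordering of the real parts of the eigenvalues
`μ_0, …, μ_N` (`N = ⌊n/2⌋`) of a circulant matrix can be realised by suitable
real coupling strengths `a₀, …, a_{n-1}`. -/
theorem stmt_15 {n : ℕ} (hn : 1 ≤ n)
    (ζ : ℂ) (hζ : ζ = Complex.exp (2 * Real.pi * Complex.I / n))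
    (π : Equiv.Perm (Fin (n / 2 + 1))) :
    ∃ a : Fin n → ℝ,
      ∀ k l : Fin (n / 2 + 1),
        (∑ j : Fin n, (a j : ℂ) * ζ ^ ((j : ℕ) * (k : ℕ))).re <
          (∑ j : Fin n, (a j : ℂ) * ζ ^ ((j : ℕ) * (l : ℕ))).re ↔
        π l < π k := by
  have : NeZero n := ⟨by omega⟩
  obtain ⟨b, hb⟩ := ZMod.exists_real_dft_eq_of_even (t := fun x ↦ -(π x.halfIndex : ℝ))
    fun x ↦ by simp only [ZMod.halfIndex_neg]
  have heig (k : Fin (n / 2 + 1)) :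
      (∑ j : Fin n, (b (j : ℕ) : ℂ) * ζ ^ ((j : ℕ) * (k : ℕ))).re = -(π k : ℝ) := by
    rw [ZMod.sum_fin_mul_pow_eq_dft_neg hζ (fun j ↦ (b j : ℂ)), hb, ofReal_re,
      ZMod.halfIndex_neg, ZMod.halfIndex_natCast]
  refine ⟨fun j ↦ b (j : ℕ), fun k l ↦ ?_⟩
  rw [heig, heig, neg_lt_neg_iff, Nat.cast_lt, Fin.lt_def]
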